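/- arXiv:2506.19221 — 4 statements merged into one kernel-verified Lean document; each statement's English description precedes it below -/
import Mathlib

section
/- For any prime p > 2, the rational number \(\sum_{n=0}^{p-1} \frac{3n+1}{2^{4n}} \binom{2n}{n}^3\) is congruent to 0 modulo p, i.e., its p-adic valuation is at least 1. -/
open Finset

/-- Key WZ-type identity. -/
lemma key_id (m k : ℕ) :
    ((m:ℚ)+1)^2 * ((3*k - 2*(m+1)) * (Nat.choose (m+1) k)^2 * (Nat.choose (2*k) k)
        - (3*k - 2*m) * (Nat.choose m k)^2 * (Nat.choose (2*k) k))
    = (k:ℚ)^3 * (Nat.choose (m+1) k)^2 * (Nat.choose (2*k) k)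
      - ((k:ℚ)+1)^3 * (Nat.choose (m+1) (k+1))^2 * (Nat.choose (2*(k+1)) (k+1)) := by
  have h3 : ((k:ℚ)+1) * (Nat.choose (2*(k+1)) (k+1)) = 2*(2*k+1) * (Nat.choose (2*k) k) := by
    have := Nat.succ_mul_centralBinom_succ k
    simp only [Nat.centralBinom] at this
    exact_mod_cast congrArg (Nat.cast : ℕ → ℚ) this
  have h2 : ((m:ℚ)+1) * (Nat.choose m k) = ((k:ℚ)+1) * (Nat.choose (m+1) (k+1)) := by
    have := congrArg (fun x : ℕ => (x:ℚ)) (Nat.add_one_mul_choose_eq m k)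
    push_cast at this
    linarith [this]
  rcases lt_trichotomy k (m+1) with hk | hk | hk
  · -- k ≤ m
    have hkm : k ≤ m := by omega
    have h1 : ((k:ℚ)+1) * (Nat.choose (m+1) (k+1)) = ((m:ℚ)+1-k) * (Nat.choose (m+1) k) := by
      have := Nat.choose_succ_right_eq (m+1) k
      have hc : ((m+1-k : ℕ) : ℚ) = (m:ℚ)+1-k := by
        have : (k:ℕ) ≤ m+1 := by omega
        push_cast [Nat.cast_sub this]
        ring
      calc ((k:ℚ)+1) * (Nat.choose (m+1) (k+1))
          = ((Nat.choose (m+1) (k+1) * (k+1) : ℕ) : ℚ) := by push_cast; ring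
        _ = ((Nat.choose (m+1) k * (m+1-k) : ℕ) : ℚ) := by rw [Nat.choose_succ_right_eq]
        _ = ((m:ℚ)+1-k) * (Nat.choose (m+1) k) := by push_cast [hc]; ring
    set a : ℚ := (Nat.choose m k : ℚ)
    set b : ℚ := (Nat.choose (m+1) k : ℚ)
    set B : ℚ := (Nat.choose (m+1) (k+1) : ℚ)
    set c : ℚ := (Nat.choose (2*k) k : ℚ)
    set C2 : ℚ := (Nat.choose (2*(k+1)) (k+1) : ℚ)
    have hM : ((m:ℚ)+1) ≠ 0 := by positivity
    have hk1 : ((k:ℚ)+1) ≠ 0 := by positivity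
    have hu : ((m:ℚ)+1-k) ≠ 0 := by
      have : (k:ℚ) ≤ m := by exact_mod_cast hkm
      intro h; nlinarith
    have ha : a = ((m:ℚ)+1-k) * b / ((m:ℚ)+1) := by
      rw [eq_div_iff hM]
      have : ((m:ℚ)+1) * a = ((m:ℚ)+1-k) * b := by rw [h2, h1]
      linarith [this]
    have hB : B = ((m:ℚ)+1-k) * b / ((k:ℚ)+1) := by
      rw [eq_div_iff hk1]
      linarith [h1]
    have hC : C2 = 2*(2*(k:ℚ)+1) * c / ((k:ℚ)+1) := by
      rw [eq_div_iff hk1]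
      linarith [h3]
    rw [ha, hB, hC]
    field_simp
    ring
  · -- k = m+1
    subst hk
    simp only [Nat.choose_self, Nat.choose_succ_self, Nat.cast_one, Nat.cast_zero]
    push_cast
    ring
  · -- k ≥ m+2
    have e1 : Nat.choose m k = 0 := Nat.choose_eq_zero_of_lt (by omega)
    have e2 : Nat.choose (m+1) k = 0 := Nat.choose_eq_zero_of_lt (by omega)
    have e3 : Nat.choose (m+1) (k+1) = 0 := Nat.choose_eq_zero_of_lt (by omega)
    simp [e1, e2, e3]



lemma sum_wz (m : ℕ) :
    ∑ k ∈ range (m+1), ((3*k - 2*m : ℚ)) * (Nat.choose m k)^2 * (Nat.choose (2*k) k) = 0 := by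
  induction m with
  | zero => simp
  | succ m ih =>
    have hM : ((m:ℚ)+1)^2 ≠ 0 := by positivity
    set g : ℕ → ℚ := fun k =>
      ((k:ℚ)^3 * (Nat.choose (m+1) k)^2 * (Nat.choose (2*k) k)) / ((m:ℚ)+1)^2 with hg
    have tele : ∑ k ∈ range (m+2), (g k - g (k+1)) = 0 := by
      rw [Finset.sum_range_sub' g]
      simp [hg, Nat.choose_eq_zero_of_lt (show m+1 < m+2 by omega)]
    have step : ∀ k : ℕ, ((3*(k:ℚ) - 2*((m:ℚ)+1)) * (Nat.choose (m+1) k)^2 * (Nat.choose (2*k) k))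
        = ((3*(k:ℚ) - 2*(m:ℚ))) * (Nat.choose m k)^2 * (Nat.choose (2*k) k) + (g k - g (k+1)) := by
      intro k
      have h := key_id m k
      have hgg : g k - g (k+1)
          = ((k:ℚ)^3 * (Nat.choose (m+1) k)^2 * (Nat.choose (2*k) k)
            - ((k:ℚ)+1)^3 * (Nat.choose (m+1) (k+1))^2 * (Nat.choose (2*(k+1)) (k+1))) / ((m:ℚ)+1)^2 := by
        simp only [hg]
        push_cast
        ring
      rw [hgg, ← h, mul_div_cancel_left₀ _ hM]
      ring
    have main : ∑ k ∈ range (m+2),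
        ((3*(k:ℚ) - 2*((m:ℚ)+1)) * (Nat.choose (m+1) k)^2 * (Nat.choose (2*k) k)) = 0 := by
      calc ∑ k ∈ range (m+2), ((3*(k:ℚ) - 2*((m:ℚ)+1)) * (Nat.choose (m+1) k)^2 * (Nat.choose (2*k) k))
          = ∑ k ∈ range (m+2), (((3*(k:ℚ) - 2*(m:ℚ))) * (Nat.choose m k)^2 * (Nat.choose (2*k) k)
              + (g k - g (k+1))) := Finset.sum_congr rfl (fun k _ => step k)
        _ = (∑ k ∈ range (m+2), ((3*(k:ℚ) - 2*(m:ℚ))) * (Nat.choose m k)^2 * (Nat.choose (2*k) k)) + 0 := by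
            rw [Finset.sum_add_distrib, tele]
        _ = 0 := by
            rw [Finset.sum_range_succ, Nat.choose_eq_zero_of_lt (show m < m+1 by omega)]
            push_cast
            rw [ih]
            ring
    push_cast
    exact main



lemma sum_wz_int (m N : ℕ) (hmN : m < N) :
    ∑ k ∈ range N, ((3*(k:ℤ) - 2*m)) * (Nat.choose m k)^2 * (Nat.choose (2*k) k) = 0 := by
  have hq : ∑ k ∈ range N, ((3*(k:ℚ) - 2*m)) * (Nat.choose m k)^2 * (Nat.choose (2*k) k) = 0 := by
    rw [← sum_wz m]
    symm
    apply Finset.sum_subset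
    · intro x hx; simp only [mem_range] at hx ⊢; omega
    · intro x _ hx
      simp only [mem_range, not_lt] at hx
      rw [Nat.choose_eq_zero_of_lt (by omega)]
      push_cast; ring
  have h2 : ((∑ k ∈ range N, ((3*(k:ℤ) - 2*m)) * (Nat.choose m k)^2 * (Nat.choose (2*k) k) : ℤ) : ℚ) = 0 := by
    push_cast
    exact hq
  exact_mod_cast h2

lemma central_cong (p : ℕ) [hp : Fact p.Prime] (hp2 : 2 < p) :
    ∀ n, n < p → ((Nat.choose (2*n) n : ZMod p)) = (-4)^n * (Nat.choose ((p-1)/2) n : ZMod p) := by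
  have hpodd : p % 2 = 1 := Nat.odd_iff.mp (hp.out.odd_of_ne_two (by omega))
  set m := (p-1)/2 with hm
  have hpm : p = 2*m + 1 := by omega
  have hp0 : ((2*m+1 : ℕ) : ZMod p) = 0 := by rw [← hpm]; exact ZMod.natCast_self p
  intro n
  induction n with
  | zero => simp
  | succ n ih =>
    intro hn1
    have hn : n < p := by omega
    have ihn := ih hn
    have hnz : ((n:ZMod p)+1) ≠ 0 := by
      have : ((n+1 : ℕ) : ZMod p) ≠ 0 := by
        rw [Ne, ZMod.natCast_eq_zero_iff]
        intro hdvd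
        have := Nat.le_of_dvd (by omega) hdvd
        omega
      simpa using this
    apply mul_left_cancel₀ hnz
    -- central binomial recurrence
    have hc : ((n:ZMod p)+1) * (Nat.choose (2*(n+1)) (n+1) : ZMod p)
        = 2*(2*(n:ZMod p)+1) * (Nat.choose (2*n) n : ZMod p) := by
      have h := Nat.succ_mul_centralBinom_succ n
      simp only [Nat.centralBinom] at h
      have := congrArg (fun x : ℕ => (x : ZMod p)) h
      push_cast at this
      convert this using 2 <;> push_cast <;> ring
    rw [hc, ihn]
    -- choose recurrence
    rcases le_or_gt n m with hnm | hnm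
    · have h := Nat.choose_succ_right_eq m n
      have hcast : ((m - n : ℕ) : ZMod p) = (m:ZMod p) - n := by
        rw [Nat.cast_sub hnm]
      have hch : ((Nat.choose m (n+1) : ZMod p)) * ((n:ZMod p)+1)
          = (Nat.choose m n : ZMod p) * ((m:ZMod p) - n) := by
        have := congrArg (fun x : ℕ => (x : ZMod p)) h
        push_cast at this
        rw [Nat.cast_sub hnm] at this
        exact this
      have hkey : (2:ZMod p)*(2*(n:ZMod p)+1) = (-4) * ((m:ZMod p) - n) := by
        have : ((2*m+1 : ℕ) : ZMod p) = 0 := hp0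
        push_cast at this
        linear_combination 2 * this
      calc 2*(2*(n:ZMod p)+1) * ((-4)^n * (Nat.choose m n : ZMod p))
          = ((-4) * ((m:ZMod p) - n)) * ((-4)^n * (Nat.choose m n : ZMod p)) := by rw [← hkey]
        _ = (-4)^(n+1) * ((Nat.choose m n : ZMod p) * ((m:ZMod p) - n)) := by ring
        _ = (-4)^(n+1) * ((Nat.choose m (n+1) : ZMod p) * ((n:ZMod p)+1)) := by rw [← hch]
        _ = ((n:ZMod p)+1) * ((-4)^(n+1) * (Nat.choose m (n+1) : ZMod p)) := by ring
    · have e1 : Nat.choose m n = 0 := Nat.choose_eq_zero_of_lt hnm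
      have e2 : Nat.choose m (n+1) = 0 := Nat.choose_eq_zero_of_lt (by omega)
      rw [e1, e2]
      push_cast
      ring





theorem stmt_16 (p : ℕ) (hp : p.Prime) (hp2 : 2 < p)
    (S : ℚ) (hS : S = ∑ n ∈ Finset.range p, ((3*(n:ℚ)+1)/2^(4*n)) * (Nat.choose (2*n) n)^3) :
    S = 0 ∨ 1 ≤ padicValRat p S := by
  haveI : Fact p.Prime := ⟨hp⟩
  haveI : NeZero p := ⟨by omega⟩
  set m := (p-1)/2 with hm
  have hpodd : p % 2 = 1 := Nat.odd_iff.mp (hp.odd_of_ne_two (by omega))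
  have hpm : p = 2*m + 1 := by omega
  set T : ℕ := ∑ n ∈ range p, (3*n+1) * 16^(p-1-n) * (Nat.choose (2*n) n)^3 with hT
  -- S = T / 16^(p-1)
  have hST : S = (T:ℚ) / 16^(p-1) := by
    rw [hS, hT]
    push_cast
    rw [Finset.sum_div]
    apply Finset.sum_congr rfl
    intro n hn
    simp only [mem_range] at hn
    have h16 : (16:ℚ)^(p-1) = 16^(p-1-n) * 2^(4*n) := by
      rw [show (2:ℚ)^(4*n) = 16^n by rw [pow_mul]; norm_num, ← pow_add]
      congr 1
      omega
    rw [div_mul_eq_mul_div, div_eq_div_iff (by positivity) (by positivity), h16]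
    ring
  have hT0 : 0 < T := by
    rw [hT]
    apply Finset.sum_pos'
    · intro i _; positivity
    · refine ⟨0, by simp [mem_range]; omega, ?_⟩
      simp
  have hS0 : S ≠ 0 := by
    rw [hST]
    have : (0:ℚ) < (T:ℚ) / 16^(p-1) := by
      have : (0:ℚ) < (T:ℚ) := by exact_mod_cast hT0
      positivity
    exact ne_of_gt this
  -- p ∣ T
  have hTz : ((T:ℕ) : ZMod p) = 0 := by
    rw [hT]
    push_cast
    have hterm : ∀ n ∈ range p,
        ((3*(n:ZMod p)+1)) * (16:ZMod p)^(p-1-n) * ((Nat.choose (2*n) n : ZMod p))^3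
        = (16:ZMod p)^(p-1) * (((3*(n:ℤ) - 2*m) : ℤ) : ZMod p) * (Nat.choose m n : ZMod p)^2 * (Nat.choose (2*n) n : ZMod p)
          + (16:ZMod p)^(p-1) * ((2*m+1 : ℕ) : ZMod p) * (Nat.choose m n : ZMod p)^2 * (Nat.choose (2*n) n : ZMod p) := by
      intro n hn
      simp only [mem_range] at hn
      have hc := central_cong p hp2 n hn
      rw [← hm] at hc
      have hsq : ((Nat.choose (2*n) n : ZMod p))^2 = (16:ZMod p)^n * (Nat.choose m n : ZMod p)^2 := by
        rw [hc, mul_pow, ← pow_mul, mul_comm n 2, pow_mul]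
        norm_num
      have hpow : (16:ZMod p)^(p-1-n) * (16:ZMod p)^n = (16:ZMod p)^(p-1) := by
        rw [← pow_add]
        congr 1
        omega
      have hco : (3*(n:ZMod p)+1) = (((3*(n:ℤ) - 2*m) : ℤ) : ZMod p) + ((2*m+1 : ℕ) : ZMod p) := by
        push_cast
        ring
      calc ((3*(n:ZMod p)+1)) * (16:ZMod p)^(p-1-n) * ((Nat.choose (2*n) n : ZMod p))^3
          = ((3*(n:ZMod p)+1)) * (16:ZMod p)^(p-1-n) * (((Nat.choose (2*n) n : ZMod p))^2 * (Nat.choose (2*n) n : ZMod p)) := by ring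
        _ = ((3*(n:ZMod p)+1)) * ((16:ZMod p)^(p-1-n) * (16:ZMod p)^n) * ((Nat.choose m n : ZMod p)^2 * (Nat.choose (2*n) n : ZMod p)) := by
            rw [hsq]; ring
        _ = ((3*(n:ZMod p)+1)) * (16:ZMod p)^(p-1) * ((Nat.choose m n : ZMod p)^2 * (Nat.choose (2*n) n : ZMod p)) := by rw [hpow]
        _ = _ := by rw [hco]; ring
    rw [Finset.sum_congr rfl hterm, Finset.sum_add_distrib]
    have h1 : ∑ n ∈ range p, (16:ZMod p)^(p-1) * (((3*(n:ℤ) - 2*m) : ℤ) : ZMod p) * (Nat.choose m n : ZMod p)^2 * (Nat.choose (2*n) n : ZMod p) = 0 := by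
      have hz := sum_wz_int m p (by omega)
      have hzz : ((∑ n ∈ range p, ((3*(n:ℤ) - 2*m)) * (Nat.choose m n)^2 * (Nat.choose (2*n) n) : ℤ) : ZMod p) = 0 := by
        rw [hz]; simp
      push_cast at hzz
      calc ∑ n ∈ range p, (16:ZMod p)^(p-1) * (((3*(n:ℤ) - 2*m) : ℤ) : ZMod p) * (Nat.choose m n : ZMod p)^2 * (Nat.choose (2*n) n : ZMod p)
          = (16:ZMod p)^(p-1) * ∑ n ∈ range p, ((3*(n:ZMod p) - 2*(m:ZMod p)) * (Nat.choose m n : ZMod p)^2 * (Nat.choose (2*n) n : ZMod p)) := by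
            rw [Finset.mul_sum]
            apply Finset.sum_congr rfl
            intro n _
            push_cast
            ring
        _ = 0 := by rw [hzz]; ring
    have h2 : ∑ n ∈ range p, (16:ZMod p)^(p-1) * ((2*m+1 : ℕ) : ZMod p) * (Nat.choose m n : ZMod p)^2 * (Nat.choose (2*n) n : ZMod p) = 0 := by
      have : ((2*m+1 : ℕ) : ZMod p) = 0 := by rw [← hpm]; exact ZMod.natCast_self p
      apply Finset.sum_eq_zero
      intro n _
      rw [this]
      ring
    rw [h1, h2]
    ring
  have hpd : p ∣ T := (ZMod.natCast_eq_zero_iff T p).mp hTz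
  -- valuation
  right
  have hTq : (T:ℚ) ≠ 0 := by exact_mod_cast hT0.ne'
  have h16q : ((16:ℚ)^(p-1)) ≠ 0 := by positivity
  rw [hST, padicValRat.div hTq h16q]
  have hv1 : padicValRat p (T:ℚ) = padicValNat p T := padicValRat.of_nat
  have hv2 : padicValRat p ((16:ℚ)^(p-1)) = 0 := by
    have hcast : ((16:ℚ)^(p-1)) = ((16^(p-1) : ℕ) : ℚ) := by push_cast; ring
    rw [hcast, padicValRat.of_nat]
    have hnd : ¬ p ∣ 16^(p-1) := by
      intro hdvd
      have h1 : p ∣ 16 := hp.dvd_of_dvd_pow hdvd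
      have h2 : p ∣ 2^4 := by norm_num at h1 ⊢; exact h1
      have h3 : p ∣ 2 := hp.dvd_of_dvd_pow h2
      have := Nat.le_of_dvd (by norm_num) h3
      omega
    rw [padicValNat.eq_zero_of_not_dvd hnd]
    simp
  rw [hv1, hv2]
  have := one_le_padicValNat_of_dvd hT0.ne' hpd
  omega
end

section
/- For any prime p > 2 and any integer k with 0 ≤ k ≤ p-1, the rational number \(F(p,k) = \frac{(-1)^{k}\, p\, (3p+k-1)!\,(2p)!}{2^{3p+k}\,(p-k-1)!\,((p+k)!)^2\,(p!)^2}\) has p-adic valuation at least 1, i.e., F(p,k) ≡ 0 (mod p). -/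
theorem stmt_17 (p : ℕ) (hp : p.Prime) (hp2 : 2 < p) (k : ℕ) (hk : k ≤ p - 1)
    (F : ℚ)
    (hF : F = ((-1 : ℚ)^k * p * (Nat.factorial (3*p + k - 1)) * (Nat.factorial (2*p))) /
      (2^(3*p + k) * (Nat.factorial (p - k - 1)) * (Nat.factorial (p + k))^2 *
        (Nat.factorial p)^2)) :
    1 ≤ padicValRat p F := by
  haveI : Fact p.Prime := ⟨hp⟩
  have hp0 : 0 < p := hp.pos
  have hkp : k < p := by omega
  -- nonzeroness facts
  have hs : ((-1 : ℚ)^k) ≠ 0 := pow_ne_zero _ (by norm_num)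
  have hpq : (p : ℚ) ≠ 0 := Nat.cast_ne_zero.mpr hp0.ne'
  have hA : ((Nat.factorial (3*p + k - 1) : ℚ)) ≠ 0 :=
    Nat.cast_ne_zero.mpr (Nat.factorial_ne_zero _)
  have hB : ((Nat.factorial (2*p) : ℚ)) ≠ 0 :=
    Nat.cast_ne_zero.mpr (Nat.factorial_ne_zero _)
  have hC : ((Nat.factorial (p - k - 1) : ℚ)) ≠ 0 :=
    Nat.cast_ne_zero.mpr (Nat.factorial_ne_zero _)
  have hD : ((Nat.factorial (p + k) : ℚ)) ≠ 0 :=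
    Nat.cast_ne_zero.mpr (Nat.factorial_ne_zero _)
  have hE : ((Nat.factorial p : ℚ)) ≠ 0 :=
    Nat.cast_ne_zero.mpr (Nat.factorial_ne_zero _)
  have h2 : ((2 : ℚ)^(3*p + k)) ≠ 0 := pow_ne_zero _ (by norm_num)
  -- valuations of the factorials
  have hvE : padicValNat p (Nat.factorial p) = 1 := by
    rw [padicValNat_factorial (b := 2) (by
      exact Nat.log_lt_of_lt_pow hp0.ne' (by nlinarith))]
    simp [Nat.div_self hp0]
  have hvD : padicValNat p (Nat.factorial (p + k)) = 1 := by
    rw [padicValNat_factorial (b := 2) (by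
      exact Nat.log_lt_of_lt_pow (by omega) (by nlinarith))]
    have h1 : (p + k) / p = 1 := Nat.div_eq_of_lt_le (by omega) (by omega)
    simp [pow_one, h1]
  have hvB : padicValNat p (Nat.factorial (2 * p)) = 2 := by
    rw [padicValNat_factorial (b := 2) (by
      exact Nat.log_lt_of_lt_pow (by omega) (by nlinarith))]
    have h1 : (2 * p) / p = 2 := by rw [Nat.mul_div_cancel _ hp0]
    simp [pow_one, h1]
  have hvC : padicValNat p (Nat.factorial (p - k - 1)) = 0 := by
    apply padicValNat.eq_zero_of_not_dvd
    rw [hp.dvd_factorial]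
    omega
  have hvA : 2 ≤ padicValNat p (Nat.factorial (3 * p + k - 1)) := by
    rw [padicValNat_factorial (b := 3) (by
      refine Nat.log_lt_of_lt_pow (by omega) ?_
      have hcube : 4*p ≤ p^3 := by
        calc 4*p ≤ p*p*p := by nlinarith
        _ = p^3 := by ring
      omega)]
    have h1 : 2 ≤ (3 * p + k - 1) / p ^ 1 := by
      rw [pow_one, Nat.le_div_iff_mul_le hp0]; omega
    calc 2 ≤ (3 * p + k - 1) / p ^ 1 := h1
    _ ≤ ∑ i ∈ Finset.Ico 1 3, (3 * p + k - 1) / p ^ i := by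
        rw [Finset.sum_Ico_eq_sum_range]
        simp [Finset.sum_range_succ]
    _ = _ := rfl
  have hv2 : padicValRat p (2 : ℚ) = 0 := by
    have : ((2 : ℕ) : ℚ) = (2 : ℚ) := by norm_num
    rw [← this, padicValRat.of_nat]
    rw [padicValNat.eq_zero_of_not_dvd (by
      intro h; have := Nat.le_of_dvd (by norm_num) h; omega)]
    simp
  have hvneg : padicValRat p ((-1 : ℚ)^k) = 0 := by
    rw [padicValRat.pow]
    have : padicValRat p (-1 : ℚ) = 0 := by
      rw [show (-1 : ℚ) = -(1 : ℚ) by norm_num, padicValRat.neg, padicValRat.one]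
    simp [this]
  rw [hF, padicValRat.div
      (mul_ne_zero (mul_ne_zero (mul_ne_zero hs hpq) hA) hB)
      (mul_ne_zero (mul_ne_zero (mul_ne_zero h2 hC) (pow_ne_zero 2 hD)) (pow_ne_zero 2 hE)),
    padicValRat.mul (mul_ne_zero (mul_ne_zero hs hpq) hA) hB,
    padicValRat.mul (mul_ne_zero hs hpq) hA,
    padicValRat.mul hs hpq,
    padicValRat.mul (mul_ne_zero (mul_ne_zero h2 hC) (pow_ne_zero 2 hD)) (pow_ne_zero 2 hE),
    padicValRat.mul (mul_ne_zero h2 hC) (pow_ne_zero 2 hD),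
    padicValRat.mul h2 hC,
    padicValRat.pow (p := p) (q := ((Nat.factorial (p + k) : ℚ))),
    padicValRat.pow (p := p) (q := ((Nat.factorial p : ℚ))),
    padicValRat.pow (p := p) (q := (2 : ℚ)),
    hvneg, hv2, padicValRat.self (by omega)]
  rw [padicValRat.of_nat, padicValRat.of_nat, padicValRat.of_nat, padicValRat.of_nat,
    padicValRat.of_nat, hvB, hvC, hvD, hvE]
  have : (2 : ℤ) ≤ (padicValNat p (Nat.factorial (3 * p + k - 1)) : ℤ) := by exact_mod_cast hvA
  push_cast
  linarith
end

section
/- For any prime p > 2 and any integer n with (p-1)/2 ≤ n ≤ p-1, the rational number \(G\!\left(n,\tfrac{p-1}{2}\right) = \frac{(-1)^{(p+1)/2}\,\bigl(10n^2+3np+\tfrac{p-1}{2}\bigr)\,\bigl(3n+\tfrac{p-3}{2}\bigr)!\,(2n)!}{2^{3n+(p+1)/2}\,\bigl(n-\tfrac{p-1}{2}\bigr)!\,\bigl(\bigl(n+\tfrac{p-1}{2}\bigr)!\bigr)^2\,(n!)^2}\) has p-adic valuation at least 1, i.e., it is congruent to 0 modulo p. -/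
theorem stmt_18 (p : ℕ) (hp : p.Prime) (hp2 : 2 < p) (n : ℕ)
    (hn1 : (p - 1) / 2 ≤ n) (hn2 : n ≤ p - 1)
    (G : ℚ)
    (hG : G = ((-1 : ℚ)^((p + 1) / 2) *
        ((10*n^2 + 3*n*p + (p - 1) / 2 : ℕ) : ℚ) *
        (Nat.factorial (3*n + (p - 3) / 2)) * (Nat.factorial (2*n))) /
      (2^(3*n + (p + 1) / 2) * (Nat.factorial (n - (p - 1) / 2)) *
        (Nat.factorial (n + (p - 1) / 2))^2 * (Nat.factorial n)^2)) :
    1 ≤ padicValRat p G := by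
  haveI : Fact p.Prime := ⟨hp⟩
  have hodd : p % 2 = 1 := Nat.odd_iff.mp (hp.odd_of_ne_two (by omega))
  obtain ⟨m, rfl⟩ : ∃ m, p = 2 * m + 1 := ⟨(p - 1) / 2, by omega⟩
  have hm1 : 1 ≤ m := by omega
  have e1 : (2 * m + 1 - 1) / 2 = m := by omega
  have e2 : (2 * m + 1 + 1) / 2 = m + 1 := by omega
  have e3 : (2 * m + 1 - 3) / 2 = m - 1 := by omega
  rw [e1] at hn1
  have hn2' : n ≤ 2 * m := by omega
  rw [e1, e2, e3] at hG
  set p := 2 * m + 1 with hpdef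
  -- basic facts
  have hppos : 0 < p := by omega
  set C : ℕ := 10 * n ^ 2 + 3 * n * p + m with hC
  set N : ℕ := C * Nat.factorial (3 * n + (m - 1)) * Nat.factorial (2 * n) with hN
  set D : ℕ := 2 ^ (3 * n + (m + 1)) * Nat.factorial (n - m) *
      (Nat.factorial (n + m)) ^ 2 * (Nat.factorial n) ^ 2 with hD
  have hCne : C ≠ 0 := by positivity
  have hNne : N ≠ 0 := by
    simp [hN, Nat.factorial_ne_zero, hCne, mul_ne_zero]
  have hDne : D ≠ 0 := by
    simp [hD, Nat.factorial_ne_zero, mul_ne_zero, pow_ne_zero]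
  have hGND : G = (-1 : ℚ) ^ (m + 1) * ((N : ℚ) / (D : ℚ)) := by
    rw [hG, hN, hD, hC]
    push_cast
    ring
  have hNQ : (N : ℚ) ≠ 0 := Nat.cast_ne_zero.mpr hNne
  have hDQ : (D : ℚ) ≠ 0 := Nat.cast_ne_zero.mpr hDne
  have hvND : padicValRat p G = (padicValNat p N : ℤ) - (padicValNat p D : ℤ) := by
    rw [hGND]
    rcases Nat.even_or_odd (m + 1) with h | h
    · rw [h.neg_one_pow, one_mul, padicValRat.div hNQ hDQ, padicValRat.of_nat, padicValRat.of_nat]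
    · rw [h.neg_one_pow, neg_one_mul, padicValRat.neg, padicValRat.div hNQ hDQ,
        padicValRat.of_nat, padicValRat.of_nat]
  rw [hvND]
  -- valuation of factorials
  have hfac0 : ∀ x : ℕ, x < p → padicValNat p x.factorial = 0 := by
    intro x hx
    apply padicValNat.eq_zero_of_not_dvd
    rw [hp.dvd_factorial]
    omega
  have hfac1 : ∀ x : ℕ, x < p ^ 2 → padicValNat p x.factorial = x / p := by
    intro x hx
    have hlog : Nat.log p x < 2 := by
      rcases Nat.eq_zero_or_pos x with h | h
      · simp [h]
      · exact Nat.log_lt_of_lt_pow h.ne' hx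
    rw [padicValNat_factorial hlog]
    simp
  have hp2sq : ∀ x : ℕ, x ≤ 7 * m → x < p ^ 2 := by
    intro x hx
    have : p ^ 2 = 4 * m ^ 2 + 4 * m + 1 := by ring
    nlinarith
  -- compute valuation of N
  have hvN : padicValNat p N = padicValNat p C + (3 * n + (m - 1)) / p + (2 * n) / p := by
    rw [hN, padicValNat.mul (mul_ne_zero hCne (Nat.factorial_ne_zero _)) (Nat.factorial_ne_zero _),
      padicValNat.mul hCne (Nat.factorial_ne_zero _),
      hfac1 _ (hp2sq _ (by omega)), hfac1 _ (hp2sq _ (by omega))]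
  -- compute valuation of D
  have hv2 : padicValNat p 2 = 0 := by
    apply padicValNat.eq_zero_of_not_dvd
    intro h
    have := Nat.le_of_dvd (by norm_num) h
    omega
  have hvD : padicValNat p D = 2 * ((n + m) / p) := by
    rw [hD, padicValNat.mul (mul_ne_zero (mul_ne_zero (pow_ne_zero _ (by norm_num))
        (Nat.factorial_ne_zero _)) (pow_ne_zero _ (Nat.factorial_ne_zero _)))
        (pow_ne_zero _ (Nat.factorial_ne_zero _)),
      padicValNat.mul (mul_ne_zero (pow_ne_zero _ (by norm_num)) (Nat.factorial_ne_zero _))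
        (pow_ne_zero _ (Nat.factorial_ne_zero _)),
      padicValNat.mul (pow_ne_zero _ (by norm_num)) (Nat.factorial_ne_zero _),
      padicValNat.pow _ _, padicValNat.pow _ _,
      padicValNat.pow _ _, hv2,
      hfac0 (n - m) (by omega), hfac0 n (by omega), hfac1 (n + m) (hp2sq _ (by omega))]
    ring
  rw [hvN, hvD]
  set a := (3 * n + (m - 1)) / p with ha
  set b := 2 * n / p with hb
  set c := (n + m) / p with hc2
  clear_value a b c
  -- final arithmetic
  rcases Nat.lt_or_ge n (m + 1) with hcase | hcase
  · -- n = m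
    have hnm : n = m := by omega
    have h1 : 1 ≤ a := by
      rw [ha, Nat.le_div_iff_mul_le hppos]
      omega
    have h2 : c = 0 := by
      rw [hc2]; exact Nat.div_eq_of_lt (by omega)
    omega
  · -- n ≥ m + 1
    have h1 : 2 ≤ a := by
      rw [ha, Nat.le_div_iff_mul_le hppos]
      omega
    have h2 : 1 ≤ b := by
      rw [hb, Nat.le_div_iff_mul_le hppos]
      omega
    have h3 : c < 2 := by
      rw [hc2, Nat.div_lt_iff_lt_mul hppos]
      omega
    omega
end

section
/- For any prime p > 2 and any integer k with 0 ≤ k ≤ p-1, the rational number \(F(p,k) = \frac{(-1)^{3p+k}\, p^3\, ((2p+2k)!)^2\,(2p)!\,((2p-2k-2)!)^2}{2^{12p}\,((p-k-1)!)^3\,((p+k)!)^3\,(p!)^4}\) has p-adic valuation at least 2, i.e., F(p,k) ≡ 0 (mod p^2). -/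
theorem stmt_19 (p : ℕ) (hp : p.Prime) (hp2 : 2 < p) (k : ℕ) (hk : k ≤ p - 1)
    (F : ℚ)
    (hF : F = ((-1 : ℚ)^(3*p + k) * (p : ℚ)^3 * (Nat.factorial (2*p + 2*k))^2 *
        (Nat.factorial (2*p)) * (Nat.factorial (2*p - 2*k - 2))^2) /
      (2^(12*p) * (Nat.factorial (p - k - 1))^3 * (Nat.factorial (p + k))^3 *
        (Nat.factorial p)^4)) :
    2 ≤ padicValRat p F := by
  haveI : Fact p.Prime := ⟨hp⟩
  have hp0 : 0 < p := hp.pos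
  have hk' : k < p := by omega
  have hpp : 3*p ≤ p^2 := by
    rw [pow_two]; exact Nat.mul_le_mul_right p (by omega)
  have hcube : 4*p ≤ p^3 := by
    have h1 : 3*(3*p) ≤ 3*p^2 := by linarith
    have h2 : 3*p^2 ≤ p*p^2 := Nat.mul_le_mul_right _ (by omega)
    have h3 : p*p^2 = p^3 := by ring
    linarith
  have hsmall : ∀ n : ℕ, n < 4*p → n < p^3 := fun n h => lt_of_lt_of_le h hcube
  have hsmall2 : ∀ n : ℕ, n < 3*p → n < p^2 := fun n h => lt_of_lt_of_le h hpp
  set N : ℕ := p^3 * (Nat.factorial (2*p + 2*k))^2 * (Nat.factorial (2*p)) *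
      (Nat.factorial (2*p - 2*k - 2))^2 with hNdef
  set D : ℕ := 2^(12*p) * (Nat.factorial (p - k - 1))^3 * (Nat.factorial (p + k))^3 *
      (Nat.factorial p)^4 with hDdef
  have hN0 : N ≠ 0 := by
    apply mul_ne_zero; apply mul_ne_zero; apply mul_ne_zero
    · exact pow_ne_zero _ hp0.ne'
    · exact pow_ne_zero _ (Nat.factorial_ne_zero _)
    · exact Nat.factorial_ne_zero _
    · exact pow_ne_zero _ (Nat.factorial_ne_zero _)
  have hD0 : D ≠ 0 := by
    apply mul_ne_zero; apply mul_ne_zero; apply mul_ne_zero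
    · exact pow_ne_zero _ two_ne_zero
    all_goals exact pow_ne_zero _ (Nat.factorial_ne_zero _)
  have hF2 : F = (-1 : ℚ)^(3*p + k) * ((N : ℚ) / (D : ℚ)) := by
    rw [hF, hNdef, hDdef]; push_cast; ring
  have hval : padicValRat p F = padicValRat p ((N : ℚ) / (D : ℚ)) := by
    rcases Nat.even_or_odd (3*p + k) with he | ho
    · rw [hF2, he.neg_one_pow, one_mul]
    · rw [hF2, ho.neg_one_pow, neg_one_mul, padicValRat.neg]
  rw [hval, padicValRat.div (by exact_mod_cast hN0) (by exact_mod_cast hD0),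
    padicValRat.of_nat, padicValRat.of_nat]
  -- Legendre computations
  have hfact : ∀ n : ℕ, n < p^3 →
      padicValNat p (Nat.factorial n) = n / p + n / p^2 := by
    intro n hn
    have hlog : Nat.log p n < 3 := by
      rcases Nat.eq_zero_or_pos n with rfl | hn0
      · simp
      · exact Nat.log_lt_of_lt_pow hn0.ne' hn
    rw [padicValNat_factorial hlog, show Finset.Ico 1 3 = {1, 2} from rfl]
    simp [pow_one]
  have hv1 : 2 ≤ padicValNat p (Nat.factorial (2*p + 2*k)) := by
    rw [hfact _ (hsmall _ (by omega))]
    have h := (Nat.le_div_iff_mul_le hp0).mpr (show 2*p ≤ 2*p + 2*k by omega)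
    exact h.trans (Nat.le_add_right _ _)
  have hv2 : padicValNat p (Nat.factorial (2*p)) = 2 := by
    rw [hfact _ (hsmall _ (by omega)), Nat.mul_div_cancel _ hp0,
      Nat.div_eq_of_lt (hsmall2 _ (by omega))]
  have hv3 : padicValNat p (Nat.factorial (p + k)) = 1 := by
    have h1 : (p + k) / p = 1 := by
      rw [add_comm, Nat.add_div_right _ hp0, Nat.div_eq_of_lt hk']
    rw [hfact _ (hsmall _ (by omega)), h1,
      Nat.div_eq_of_lt (hsmall2 _ (by omega))]
  have hv4 : padicValNat p (Nat.factorial (p - k - 1)) = 0 := by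
    rw [hfact _ (hsmall _ (by omega)), Nat.div_eq_of_lt (by omega),
      Nat.div_eq_of_lt (hsmall2 _ (by omega))]
  have hv5 : padicValNat p (Nat.factorial p) = 1 := by
    rw [hfact _ (hsmall _ (by omega)), Nat.div_self hp0,
      Nat.div_eq_of_lt (hsmall2 _ (by omega))]
  have hv6 : padicValNat p (2^(12*p)) = 0 := by
    apply padicValNat.eq_zero_of_not_dvd
    intro h
    have := Nat.le_of_dvd (by norm_num) (hp.dvd_of_dvd_pow h)
    omega
  have hvN : 9 ≤ padicValNat p N := by
    rw [hNdef,
      padicValNat.mul (by positivity) (pow_ne_zero _ (Nat.factorial_ne_zero _)),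
      padicValNat.mul (by positivity) (Nat.factorial_ne_zero _),
      padicValNat.mul (pow_ne_zero _ hp0.ne') (pow_ne_zero _ (Nat.factorial_ne_zero _)),
      padicValNat.prime_pow,
      padicValNat.pow _ _,
      padicValNat.pow _ _]
    omega
  have hvD : padicValNat p D = 7 := by
    rw [hDdef,
      padicValNat.mul (by positivity) (pow_ne_zero _ (Nat.factorial_ne_zero _)),
      padicValNat.mul (by positivity) (pow_ne_zero _ (Nat.factorial_ne_zero _)),
      padicValNat.mul (pow_ne_zero _ two_ne_zero) (pow_ne_zero _ (Nat.factorial_ne_zero _)),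
      hv6,
      padicValNat.pow _ _,
      padicValNat.pow _ _,
      padicValNat.pow _ _,
      hv3, hv4, hv5]
  rw [hvD]
  omega
end
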